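/- arXiv:1308.4250 — 6 statements merged into one kernel-verified Lean document; each statement's English description precedes it below -/
import Mathlib

section
/- The function φ from infinite binary sequences to [0,∞] defined by φ(0ξ) = 1/(1 + 1/φ(ξ)) and φ(1ξ) = 1 + φ(ξ) satisfies φ(y(ξ)) = 2·φ(ξ) for every infinite binary sequence ξ, where y is defined recursively by y(00η) = 0·y(η), y(01η) = 10·y⁻¹(η), y(1η) = 11·y(η) (and y⁻¹ is defined by y⁻¹(0η) = 00·y⁻¹(η), y⁻¹(10η) = 01·y(η), y⁻¹(11η) = 1·y⁻¹(η)). -/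
/-!
Reading a binary word `w` from the left composes the maps `step false x = 1/(1 + 1/x)` and
`step true x = 1 + x`, so `φ (w ++ s)` lies in the interval `[w.foldr step 0, w.foldr step ∞]`.
Its endpoints are the convergents `b/d ≤ a/c` of the unimodular matrix `!![a, b; c, d]` of `w`,
so it has width `1/(cd)`, which tends to zero along the prefixes of any sequence containing a `0`;
along `111…` the left endpoints tend to `∞`. Hence the prefixes of a sequence determine at most
one value lying in all their intervals. Each clause defining `y` and `z` matches an identity of
Möbius maps, such as `2 · step 0 (step 0 t) = step 0 (2t)`, so by induction on `n` the value
`2 φ(ξ)` lies in the interval of the first `n` letters of `y ξ` (and `φ(ξ)/2` in that of `z ξ`).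
Since `φ (y ξ)` lies there too, the two are equal.
-/

open scoped ENNReal NNReal

namespace SternBrocot

noncomputable def step : Bool → ℝ≥0∞ → ℝ≥0∞
  | false, x => (1 + x⁻¹)⁻¹
  | true, x => 1 + x

lemma step_mono (b : Bool) : Monotone (step b) := by
  intro x x' h
  cases b
  · exact ENNReal.inv_le_inv.2 (add_le_add_right (ENNReal.inv_le_inv.2 h) 1)
  · exact add_le_add_right h 1

lemma foldr_step_mono (w : List Bool) : Monotone (w.foldr step) := by
  induction w with
  | nil => exact monotone_id
  | cons b w ih => exact (step_mono b).comp ih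

def interval (w : List Bool) : Set ℝ≥0∞ := Set.Icc (w.foldr step 0) (w.foldr step ∞)

lemma interval_append_subset (u v : List Bool) : interval (u ++ v) ⊆ interval u := by
  intro x hx
  simp only [interval, List.foldr_append] at hx
  exact ⟨(foldr_step_mono u zero_le).trans hx.1, hx.2.trans (foldr_step_mono u le_top)⟩

lemma interval_take_succ_subset (s : Stream' Bool) (n : ℕ) :
    interval (s.take (n + 1)) ⊆ interval (s.take n) := by
  rw [Stream'.take_succ']
  exact interval_append_subset _ _

lemma step_mem_interval_take_cons {s : Stream' Bool} {n : ℕ} {x : ℝ≥0∞}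
    (h : x ∈ interval (s.take n)) (b : Bool) :
    step b x ∈ interval ((Stream'.cons b s).take (n + 1)) :=
  ⟨step_mono b h.1, step_mono b h.2⟩

lemma mem_interval_take {φ : Stream' Bool → ℝ≥0∞}
    (hφ : ∀ b ξ, φ (Stream'.cons b ξ) = step b (φ ξ)) (s : Stream' Bool) (n : ℕ) :
    φ s ∈ interval (s.take n) := by
  induction n generalizing s with
  | zero => exact ⟨zero_le, le_top⟩
  | succ n ih =>
    rw [← Stream'.eta s, hφ]
    exact step_mem_interval_take_cons (ih s.tail) s.head

/-- `step b` is the Möbius transformation `x ↦ (p x + q) / (r x + t)` of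
`stepMatrix b = !![p, q; r, t]`. -/
def stepMatrix : Bool → Matrix (Fin 2) (Fin 2) ℕ
  | false => !![1, 0; 1, 1]
  | true => !![1, 1; 0, 1]

def wordMatrix (w : List Bool) : Matrix (Fin 2) (Fin 2) ℕ := (w.map stepMatrix).prod

lemma wordMatrix_cons (b : Bool) (w : List Bool) :
    wordMatrix (b :: w) = stepMatrix b * wordMatrix w := by
  simp [wordMatrix]

lemma wordMatrix_append (u v : List Bool) :
    wordMatrix (u ++ v) = wordMatrix u * wordMatrix v := by
  simp [wordMatrix]

lemma wordMatrix_det_eq_one (w : List Bool) :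
    wordMatrix w 0 0 * wordMatrix w 1 1 = wordMatrix w 0 1 * wordMatrix w 1 0 + 1 := by
  induction w with
  | nil => simp [wordMatrix]
  | cons b w ih =>
    cases b <;> simp [wordMatrix_cons, stepMatrix, Matrix.mul_apply, Fin.sum_univ_two] <;> nlinarith

lemma wordMatrix_zero_zero_pos (w : List Bool) : 0 < wordMatrix w 0 0 := by
  nlinarith [wordMatrix_det_eq_one w]

lemma wordMatrix_one_one_pos (w : List Bool) : 0 < wordMatrix w 1 1 := by
  nlinarith [wordMatrix_det_eq_one w]

lemma step_true_natCast_div (p q : ℕ) (h : p ≠ 0 ∨ q ≠ 0) :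
    step true (p / q) = ↑(p + q) / q := by
  rcases eq_or_ne q 0 with rfl | hq
  · simp_all [step, ENNReal.div_zero]
  · rw [step, Nat.cast_add, ENNReal.add_div, add_comm (1 : ℝ≥0∞),
      ENNReal.div_self (by exact_mod_cast hq) (ENNReal.natCast_ne_top q)]

lemma step_false_natCast_div (p q : ℕ) :
    step false (p / q) = p / ↑(p + q) := by
  rcases eq_or_ne p 0 with rfl | hp
  · simp [step]
  · have hp' : (p : ℝ≥0∞) ≠ 0 := by exact_mod_cast hp
    change (step true (p / q)⁻¹)⁻¹ = _
    rw [ENNReal.inv_div (Or.inl (ENNReal.natCast_ne_top q)) (Or.inr hp'),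
      step_true_natCast_div q p (Or.inr hp), add_comm q p,
      ENNReal.inv_div (Or.inl (ENNReal.natCast_ne_top _)) (Or.inl hp')]

lemma foldr_step_zero (w : List Bool) :
    w.foldr step 0 = (wordMatrix w 0 1 : ℝ≥0∞) / (wordMatrix w 1 1 : ℕ) := by
  induction w with
  | nil => simp [wordMatrix]
  | cons b w ih =>
    cases b
    · rw [List.foldr_cons, ih, step_false_natCast_div]
      simp [wordMatrix_cons, stepMatrix, Matrix.mul_apply, Fin.sum_univ_two]
    · rw [List.foldr_cons, ih,
        step_true_natCast_div _ _ (Or.inr (wordMatrix_one_one_pos w).ne')]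
      simp [wordMatrix_cons, stepMatrix, Matrix.mul_apply, Fin.sum_univ_two]

lemma foldr_step_top (w : List Bool) :
    w.foldr step ∞ = (wordMatrix w 0 0 : ℝ≥0∞) / (wordMatrix w 1 0 : ℕ) := by
  induction w with
  | nil => simp [wordMatrix]
  | cons b w ih =>
    cases b
    · rw [List.foldr_cons, ih, step_false_natCast_div]
      simp [wordMatrix_cons, stepMatrix, Matrix.mul_apply, Fin.sum_univ_two]
    · rw [List.foldr_cons, ih,
        step_true_natCast_div _ _ (Or.inl (wordMatrix_zero_zero_pos w).ne')]
      simp [wordMatrix_cons, stepMatrix, Matrix.mul_apply, Fin.sum_univ_two]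

lemma foldr_step_top_le (w : List Bool) :
    w.foldr step ∞ ≤
      w.foldr step 0 + ((wordMatrix w 1 0 * wordMatrix w 1 1 : ℕ) : ℝ≥0∞)⁻¹ := by
  rw [foldr_step_top, foldr_step_zero]
  set a := wordMatrix w 0 0
  set b := wordMatrix w 0 1
  set c := wordMatrix w 1 0
  set d := wordMatrix w 1 1
  rcases Nat.eq_zero_or_pos c with hc | hc
  · simp [hc]
  have hc' : (c : ℝ≥0∞) ≠ 0 := by exact_mod_cast hc.ne'
  have hd' : (d : ℝ≥0∞) ≠ 0 := by exact_mod_cast (wordMatrix_one_one_pos w).ne'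
  refine le_of_eq ?_
  calc (a : ℝ≥0∞) / c = ↑(a * d) / ↑(c * d) := by
        push_cast; rw [ENNReal.mul_div_mul_right _ _ hd' (ENNReal.natCast_ne_top d)]
    _ = ↑(c * b) / ↑(c * d) + (↑(c * d))⁻¹ := by
        rw [wordMatrix_det_eq_one, mul_comm b, Nat.cast_add, Nat.cast_one, ENNReal.add_div,
          one_div]
    _ = b / d + (↑(c * d))⁻¹ := by
        push_cast; rw [ENNReal.mul_div_mul_left _ _ hc' (ENNReal.natCast_ne_top c)]

lemma wordMatrix_one_zero_pos {w : List Bool} (h : false ∈ w) : 0 < wordMatrix w 1 0 := by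
  induction w with
  | nil => simp at h
  | cons b w ih =>
    cases b
    · simp [wordMatrix_cons, stepMatrix, Matrix.mul_apply, Fin.sum_univ_two,
        wordMatrix_zero_zero_pos]
    · simpa [wordMatrix_cons, stepMatrix, Matrix.mul_apply, Fin.sum_univ_two]
        using ih (by simpa using h)

lemma length_add_two_le_sum_wordMatrix (w : List Bool) :
    w.length + 2 ≤
      wordMatrix w 0 0 + wordMatrix w 0 1 + wordMatrix w 1 0 + wordMatrix w 1 1 := by
  induction w with
  | nil => simp [wordMatrix]
  | cons b w ih =>
    have := wordMatrix_zero_zero_pos w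
    have := wordMatrix_one_one_pos w
    cases b <;> simp [wordMatrix_cons, stepMatrix, Matrix.mul_apply, Fin.sum_univ_two] <;> omega

lemma length_add_two_le_wordMatrix_append {u : List Bool} (hu : false ∈ u) (v : List Bool) :
    v.length + 2 ≤ 2 * (wordMatrix (u ++ v) 1 0 * wordMatrix (u ++ v) 1 1) := by
  have hp := wordMatrix_one_zero_pos hu
  have hq := wordMatrix_one_one_pos u
  have ha := wordMatrix_zero_zero_pos v
  have hd := wordMatrix_one_one_pos v
  have hs := length_add_two_le_sum_wordMatrix v
  rw [wordMatrix_append]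
  simp only [Matrix.mul_apply, Fin.sum_univ_two]
  set a := wordMatrix v 0 0
  set b := wordMatrix v 0 1
  set c := wordMatrix v 1 0
  set d := wordMatrix v 1 1
  set p := wordMatrix u 1 0
  set q := wordMatrix u 1 1
  have h1 : a + c ≤ p * a + q * c := by nlinarith
  have h2 : b + d ≤ p * b + q * d := by nlinarith
  calc v.length + 2 ≤ a + b + c + d := hs
    _ ≤ 2 * ((a + c) * (b + d)) := by nlinarith
    _ ≤ 2 * ((p * a + q * c) * (p * b + q * d)) := by gcongr

lemma exists_le_wordMatrix_take {s : Stream' Bool} {k : ℕ} (hk : s.get k = false) (m : ℕ) :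
    ∃ n, m ≤ wordMatrix (s.take n) 1 0 * wordMatrix (s.take n) 1 1 := by
  refine ⟨k + 1 + 2 * m, ?_⟩
  set w := s.take (k + 1 + 2 * m)
  have hu : false ∈ w.take (k + 1) := by
    rw [Stream'.take_take, min_eq_right (by omega), Stream'.take_succ']
    simp [hk]
  have := length_add_two_le_wordMatrix_append hu (w.drop (k + 1))
  rw [List.take_append_drop, List.length_drop, Stream'.length_take] at this
  omega

lemma le_of_forall_mem_interval_take {s : Stream' Bool} {k : ℕ} (hk : s.get k = false)
    {x x' : ℝ≥0∞} (hx : ∀ n, x ∈ interval (s.take n)) (hx' : ∀ n, x' ∈ interval (s.take n)) :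
    x ≤ x' := by
  refine ENNReal.le_of_forall_pos_le_add fun ε hε _ => ?_
  obtain ⟨m, hm⟩ := ENNReal.exists_nat_gt (ENNReal.inv_ne_top.2 (ENNReal.coe_ne_zero.2 hε.ne'))
  obtain ⟨n, hn⟩ := exists_le_wordMatrix_take hk m
  have hwidth : ((wordMatrix (s.take n) 1 0 * wordMatrix (s.take n) 1 1 : ℕ) : ℝ≥0∞)⁻¹ ≤ ε :=
    ENNReal.inv_le_iff_inv_le.2 (hm.le.trans (by exact_mod_cast hn))
  calc x ≤ (s.take n).foldr step ∞ := (hx n).2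
    _ ≤ (s.take n).foldr step 0 + _ := foldr_step_top_le _
    _ ≤ x' + ε := add_le_add (hx' n).1 hwidth

lemma foldr_step_take_const_true (n : ℕ) :
    (Stream'.take n (Stream'.const true)).foldr step 0 = n := by
  induction n with
  | zero => simp
  | succ n ih =>
    rw [Stream'.const_eq, Stream'.take_succ_cons, List.foldr_cons, ih,
      Nat.cast_succ, add_comm]
    rfl

lemma eq_top_of_forall_mem_interval_take {s : Stream' Bool} (h : ∀ k, s.get k = true)
    {x : ℝ≥0∞} (hx : ∀ n, x ∈ interval (s.take n)) : x = ∞ := by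
  obtain rfl : s = Stream'.const true := funext h
  by_contra hne
  obtain ⟨n, hn⟩ := ENNReal.exists_nat_gt hne
  exact (foldr_step_take_const_true n ▸ (hx n).1).not_gt hn

lemma subsingleton_iInter_interval_take (s : Stream' Bool) :
    (⋂ n, interval (s.take n)).Subsingleton := by
  intro x hx x' hx'
  simp only [Set.mem_iInter] at hx hx'
  by_cases h : ∃ k, s.get k = false
  · obtain ⟨k, hk⟩ := h
    exact le_antisymm (le_of_forall_mem_interval_take hk hx hx')
      (le_of_forall_mem_interval_take hk hx' hx)
  · simp only [not_exists, Bool.not_eq_false] at h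
    rw [eq_top_of_forall_mem_interval_take h hx, eq_top_of_forall_mem_interval_take h hx']

lemma step_false_coe (r : ℝ≥0) : step false r = ↑(r / (1 + r)) := by
  rcases eq_or_ne r 0 with rfl | hr
  · simp [step]
  · rw [step, ← ENNReal.coe_inv hr, ← ENNReal.coe_one, ← ENNReal.coe_add,
      ← ENNReal.coe_inv (by positivity)]
    congr 1
    field_simp
    ring

lemma step_true_coe (r : ℝ≥0) : step true r = ↑(1 + r) := by simp [step]

lemma coe_div_two (r : ℝ≥0) : (r : ℝ≥0∞) / 2 = ↑(r / 2) := by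
  rw [ENNReal.coe_div two_ne_zero, ENNReal.coe_ofNat]

lemma two_mul_coe (r : ℝ≥0) : 2 * (r : ℝ≥0∞) = ↑(2 * r) := by norm_cast

lemma two_mul_step_false_step_false (t : ℝ≥0∞) :
    2 * step false (step false t) = step false (2 * t) := by
  induction t with
  | top => simp [step, one_add_one_eq_two, ENNReal.mul_inv_cancel]
  | coe r =>
    simp only [step_false_coe, two_mul_coe, ENNReal.coe_inj]
    field_simp
    ring

lemma two_mul_step_false_step_true (t : ℝ≥0∞) :
    2 * step false (step true t) = step true (step false (t / 2)) := by
  induction t with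
  | top => simp [step, ENNReal.top_div_of_ne_top, one_add_one_eq_two]
  | coe r =>
    simp only [step_false_coe, step_true_coe, two_mul_coe, coe_div_two, ENNReal.coe_inj]
    field_simp
    ring

lemma two_mul_step_true (t : ℝ≥0∞) : 2 * step true t = step true (step true (2 * t)) := by
  simp only [step]; ring

lemma step_false_div_two (t : ℝ≥0∞) : step false t / 2 = step false (step false (t / 2)) := by
  induction t with
  | top => simp [step, ENNReal.top_div_of_ne_top, one_add_one_eq_two]
  | coe r =>
    simp only [step_false_coe, coe_div_two, ENNReal.coe_inj]
    field_simp
    ring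

lemma step_true_step_false_div_two (t : ℝ≥0∞) :
    step true (step false t) / 2 = step false (step true (2 * t)) := by
  induction t with
  | top => simp [step, one_add_one_eq_two, ENNReal.div_self]
  | coe r =>
    simp only [step_false_coe, step_true_coe, two_mul_coe, coe_div_two, ENNReal.coe_inj]
    field_simp
    ring

lemma step_true_step_true_div_two (t : ℝ≥0∞) :
    step true (step true t) / 2 = step true (t / 2) := by
  simp only [step]
  rw [← add_assoc, one_add_one_eq_two, ENNReal.add_div,
    ENNReal.div_self two_ne_zero ENNReal.ofNat_ne_top]

lemma doubling_mem_interval_take {φ : Stream' Bool → ℝ≥0∞}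
    (hφ : ∀ b ξ, φ (Stream'.cons b ξ) = step b (φ ξ)) {y z : Stream' Bool → Stream' Bool}
    (hy00 : ∀ η, y (Stream'.cons false (Stream'.cons false η)) = Stream'.cons false (y η))
    (hy01 : ∀ η, y (Stream'.cons false (Stream'.cons true η)) =
      Stream'.cons true (Stream'.cons false (z η)))
    (hy1 : ∀ η, y (Stream'.cons true η) = Stream'.cons true (Stream'.cons true (y η)))
    (hz0 : ∀ η, z (Stream'.cons false η) = Stream'.cons false (Stream'.cons false (z η)))
    (hz10 : ∀ η, z (Stream'.cons true (Stream'.cons false η)) =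
      Stream'.cons false (Stream'.cons true (y η)))
    (hz11 : ∀ η, z (Stream'.cons true (Stream'.cons true η)) = Stream'.cons true (z η))
    (n : ℕ) (ξ : Stream' Bool) :
    2 * φ ξ ∈ interval ((y ξ).take n) ∧ φ ξ / 2 ∈ interval ((z ξ).take n) := by
  induction n generalizing ξ with
  | zero => exact ⟨⟨zero_le, le_top⟩, ⟨zero_le, le_top⟩⟩
  | succ n ih =>
    obtain ⟨b₀, b₁, η, rfl⟩ : ∃ b₀ b₁ η, ξ = Stream'.cons b₀ (Stream'.cons b₁ η) :=
      ⟨_, _, _, by rw [Stream'.eta, Stream'.eta]⟩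
    constructor
    · cases b₀
      · cases b₁
        · rw [hy00, hφ, hφ, two_mul_step_false_step_false]
          exact step_mem_interval_take_cons (ih η).1 false
        · rw [hy01, hφ, hφ, two_mul_step_false_step_true]
          exact interval_take_succ_subset _ _ <|
            step_mem_interval_take_cons (step_mem_interval_take_cons (ih η).2 false) true
      · rw [hy1, hφ, two_mul_step_true]
        exact interval_take_succ_subset _ _ <|
          step_mem_interval_take_cons (step_mem_interval_take_cons (ih _).1 true) true
    · cases b₀
      · rw [hz0, hφ, step_false_div_two]
        exact interval_take_succ_subset _ _ <|
          step_mem_interval_take_cons (step_mem_interval_take_cons (ih _).2 false) false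
      · cases b₁
        · rw [hz10, hφ, hφ, step_true_step_false_div_two]
          exact interval_take_succ_subset _ _ <|
            step_mem_interval_take_cons (step_mem_interval_take_cons (ih η).1 true) false
        · rw [hz11, hφ, hφ, step_true_step_true_div_two]
          exact step_mem_interval_take_cons (ih η).2 true

end SternBrocot

/-- φ(y(ξ)) = 2·φ(ξ). -/
theorem phi_doubling
    (φ : Stream' Bool → ENNReal)
    (hφ0 : ∀ ξ, φ (Stream'.cons false ξ) = (1 + (φ ξ)⁻¹)⁻¹)
    (hφ1 : ∀ ξ, φ (Stream'.cons true ξ) = 1 + φ ξ)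
    (y z : Stream' Bool → Stream' Bool)
    (hy00 : ∀ η, y (Stream'.cons false (Stream'.cons false η)) =
      Stream'.cons false (y η))
    (hy01 : ∀ η, y (Stream'.cons false (Stream'.cons true η)) =
      Stream'.cons true (Stream'.cons false (z η)))
    (hy1 : ∀ η, y (Stream'.cons true η) =
      Stream'.cons true (Stream'.cons true (y η)))
    (hz0 : ∀ η, z (Stream'.cons false η) =
      Stream'.cons false (Stream'.cons false (z η)))
    (hz10 : ∀ η, z (Stream'.cons true (Stream'.cons false η)) =
      Stream'.cons false (Stream'.cons true (y η)))
    (hz11 : ∀ η, z (Stream'.cons true (Stream'.cons true η)) =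
      Stream'.cons true (z η)) :
    ∀ ξ : Stream' Bool, φ (y ξ) = 2 * φ ξ := by
  have hφ : ∀ b ξ, φ (Stream'.cons b ξ) = SternBrocot.step b (φ ξ) := by
    rintro (_ | _) ξ
    exacts [hφ0 ξ, hφ1 ξ]
  intro ξ
  refine SternBrocot.subsingleton_iInter_interval_take (y ξ) ?_ ?_ <;>
    refine Set.mem_iInter.2 fun n => ?_
  · exact SternBrocot.mem_interval_take hφ (y ξ) n
  · exact (SternBrocot.doubling_mem_interval_take hφ hy00 hy01 hy1 hz0 hz10 hz11 n ξ).1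
end

section
/- The map y: 2^ℕ → 2^ℕ defined mutually recursively by y(00η) = 0·y(η), y(01η) = 10·z(η), y(1η) = 11·y(η), and z(0η) = 00·z(η), z(10η) = 01·y(η), z(11η) = 1·z(η), is a bijection of 2^ℕ with inverse z. -/
open Stream'

private lemma stream_eq_of_take_eq {s t : Stream' Bool}
    (h : ∀ n, s.take n = t.take n) : s = t := by
  ext n
  have h1 := h (n + 1)
  have h2 : s.take n ++ [s.get n] = t.take n ++ [t.get n] := by
    rwa [Stream'.concat_take_get, Stream'.concat_take_get]
  rw [h n] at h2
  simpa using List.append_cancel_left h2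

/-- the map y is a bijection of 2^ℕ with inverse z. -/
theorem y_bijective_with_inverse
    (y z : Stream' Bool → Stream' Bool)
    (hy00 : ∀ η, y (Stream'.cons false (Stream'.cons false η)) =
      Stream'.cons false (y η))
    (hy01 : ∀ η, y (Stream'.cons false (Stream'.cons true η)) =
      Stream'.cons true (Stream'.cons false (z η)))
    (hy1 : ∀ η, y (Stream'.cons true η) =
      Stream'.cons true (Stream'.cons true (y η)))
    (hz0 : ∀ η, z (Stream'.cons false η) =
      Stream'.cons false (Stream'.cons false (z η)))
    (hz10 : ∀ η, z (Stream'.cons true (Stream'.cons false η)) =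
      Stream'.cons false (Stream'.cons true (y η)))
    (hz11 : ∀ η, z (Stream'.cons true (Stream'.cons true η)) =
      Stream'.cons true (z η)) :
    Function.Bijective y ∧ (∀ ξ, z (y ξ) = ξ) ∧ (∀ ξ, y (z ξ) = ξ) := by
  have key : ∀ n : ℕ, ∀ ξ : Stream' Bool,
      (z (y ξ)).take n = ξ.take n ∧ (y (z ξ)).take n = ξ.take n := by
    intro n
    induction n using Nat.strong_induction_on with
    | _ n ih =>
      intro ξ
      obtain ⟨a, ξ', rfl⟩ : ∃ a ξ', ξ = Stream'.cons a ξ' :=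
        ⟨ξ.head, ξ.tail, (Stream'.eta ξ).symm⟩
      obtain ⟨b, η, rfl⟩ : ∃ b η, ξ' = Stream'.cons b η :=
        ⟨ξ'.head, ξ'.tail, (Stream'.eta ξ').symm⟩
      constructor
      · -- z (y ξ) take
        cases a
        · cases b
          · rw [hy00, hz0]
            rcases n with _ | _ | m
            · rfl
            · rfl
            · have := (ih m (by omega) η).1
              simp [Stream'.take_succ_cons, this]
          · rw [hy01, hz10]
            rcases n with _ | _ | m
            · rfl
            · rfl
            · have := (ih m (by omega) η).2
              simp [Stream'.take_succ_cons, this]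
        · rw [hy1, hz11]
          rcases n with _ | m
          · rfl
          · have := (ih m (by omega) (Stream'.cons b η)).1
            simp [Stream'.take_succ_cons, this]
      · -- y (z ξ) take
        cases a
        · rw [hz0, hy00]
          rcases n with _ | m
          · rfl
          · have := (ih m (by omega) (Stream'.cons b η)).2
            simp [Stream'.take_succ_cons, this]
        · cases b
          · rw [hz10, hy01]
            rcases n with _ | _ | m
            · rfl
            · rfl
            · have := (ih m (by omega) η).1
              simp [Stream'.take_succ_cons, this]
          · rw [hz11, hy1]
            rcases n with _ | _ | m
            · rfl
            · rfl
            · have := (ih m (by omega) η).2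
              simp [Stream'.take_succ_cons, this]
  have hzy : ∀ ξ, z (y ξ) = ξ := fun ξ =>
    stream_eq_of_take_eq fun n => (key n ξ).1
  have hyz : ∀ ξ, y (z ξ) = ξ := fun ξ =>
    stream_eq_of_take_eq fun n => (key n ξ).2
  exact ⟨Function.bijective_iff_has_inverse.mpr ⟨z, hzy, hyz⟩, hzy, hyz⟩
end

section
/- The bijections x and y of 2^ℕ satisfy the relation y = x ∘ y_{0} ∘ y_{10}^{-1} ∘ y_{11}, where for a finite binary sequence s, y_s is the localization of y to sequences extending s (y_s(s·η) = s·y(η) and y_s(ξ) = ξ if ξ does not extend s), and composition is applied left-to-right as in the convention ξ.(fg) = (ξ.f).g. -/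
/-- The localization of a map `f` of `2^ℕ` at a finite binary sequence `s`:
it acts as `f` on the tail of sequences extending `s` and as the identity elsewhere. -/
def loc (s : List Bool) (f : Stream' Bool → Stream' Bool) (ξ : Stream' Bool) : Stream' Bool :=
  if Stream'.take s.length ξ = s then
    Stream'.appendStream' s (f (Stream'.drop s.length ξ))
  else ξ

private lemma take_one (b : Bool) (η : Stream' Bool) :
    Stream'.take 1 (Stream'.cons b η) = [b] := by
  rw [Stream'.take_succ, Stream'.head_cons, Stream'.tail_cons, Stream'.take_zero]

private lemma take_two (a b : Bool) (η : Stream' Bool) :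
    Stream'.take 2 (Stream'.cons a (Stream'.cons b η)) = [a, b] := by
  rw [Stream'.take_succ, Stream'.head_cons, Stream'.tail_cons, take_one]

private lemma drop_one (b : Bool) (η : Stream' Bool) :
    Stream'.drop 1 (Stream'.cons b η) = η := by
  rw [Stream'.drop_succ, Stream'.tail_cons, Stream'.drop_zero]

private lemma drop_two (a b : Bool) (η : Stream' Bool) :
    Stream'.drop 2 (Stream'.cons a (Stream'.cons b η)) = η := by
  rw [Stream'.drop_succ, Stream'.tail_cons, drop_one]

private lemma loc1_hit (f : Stream' Bool → Stream' Bool) (η : Stream' Bool) :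
    loc [false] f (Stream'.cons false η) = Stream'.cons false (f η) := by
  simp only [loc, List.length, Nat.reduceAdd, take_one, eq_self_iff_true, if_true, drop_one,
    Stream'.cons_append_stream, Stream'.nil_append_stream]

private lemma loc1_miss (f : Stream' Bool → Stream' Bool) (η : Stream' Bool) :
    loc [false] f (Stream'.cons true η) = Stream'.cons true η := by
  simp only [loc, List.length, Nat.reduceAdd, take_one]
  exact if_neg (by simp)

private lemma loc2_hit (a b : Bool) (f : Stream' Bool → Stream' Bool) (η : Stream' Bool) :
    loc [a, b] f (Stream'.cons a (Stream'.cons b η)) =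
      Stream'.cons a (Stream'.cons b (f η)) := by
  simp only [loc, List.length, Nat.reduceAdd, take_two, eq_self_iff_true, if_true, drop_two,
    Stream'.cons_append_stream, Stream'.nil_append_stream]

private lemma loc2_miss (a b c d : Bool) (h : ¬(c = a ∧ d = b))
    (f : Stream' Bool → Stream' Bool) (η : Stream' Bool) :
    loc [a, b] f (Stream'.cons c (Stream'.cons d η)) = Stream'.cons c (Stream'.cons d η) := by
  simp only [loc, List.length, Nat.reduceAdd, take_two]
  exact if_neg (by simpa using h)

private lemma loc2_miss_head (b : Bool) (f : Stream' Bool → Stream' Bool) (η : Stream' Bool) :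
    loc [true, b] f (Stream'.cons false η) = Stream'.cons false η := by
  simp only [loc, List.length, Nat.reduceAdd, Stream'.take_succ, Stream'.head_cons]
  exact if_neg (by simp)

/-- y = x · y₀ · y₁₀⁻¹ · y₁₁ (composition left-to-right). -/
theorem y_rewriting_relation
    (x y z : Stream' Bool → Stream' Bool)
    (hx00 : ∀ η, x (Stream'.cons false (Stream'.cons false η)) = Stream'.cons false η)
    (hx01 : ∀ η, x (Stream'.cons false (Stream'.cons true η)) =
      Stream'.cons true (Stream'.cons false η))
    (hx1 : ∀ η, x (Stream'.cons true η) =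
      Stream'.cons true (Stream'.cons true η))
    (hy00 : ∀ η, y (Stream'.cons false (Stream'.cons false η)) =
      Stream'.cons false (y η))
    (hy01 : ∀ η, y (Stream'.cons false (Stream'.cons true η)) =
      Stream'.cons true (Stream'.cons false (z η)))
    (hy1 : ∀ η, y (Stream'.cons true η) =
      Stream'.cons true (Stream'.cons true (y η)))
    (hz0 : ∀ η, z (Stream'.cons false η) =
      Stream'.cons false (Stream'.cons false (z η)))
    (hz10 : ∀ η, z (Stream'.cons true (Stream'.cons false η)) =
      Stream'.cons false (Stream'.cons true (y η)))
    (hz11 : ∀ η, z (Stream'.cons true (Stream'.cons true η)) =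
      Stream'.cons true (z η)) :
    ∀ ξ : Stream' Bool,
      y ξ = loc [true, true] y (loc [true, false] z (loc [false] y (x ξ))) := by
  intro ξ
  rw [← Stream'.eta ξ, ← Stream'.eta ξ.tail]
  rcases ξ.head with _ | _ <;> rcases ξ.tail.head with _ | _
  · rw [hx00, loc1_hit, loc2_miss_head, loc2_miss_head, hy00]
  · rw [hx01, loc1_miss, loc2_hit, loc2_miss true true true false (by simp), hy01]
  · rw [hx1, loc1_miss, loc2_miss true false true true (by simp), loc2_hit, hy1]
  · rw [hx1, loc1_miss, loc2_miss true false true true (by simp), loc2_hit, hy1]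
end

section
/- For finite binary sequences s and t such that t.x_s is defined (i.e., t has a prefix in the domain tree of x_s), the relation y_t ∘ x_s = x_s ∘ y_{t.x_s} holds as maps on 2^ℕ. -/
/-!
`x_s` is injective, because `x` is, and by hypothesis it carries the cone above `t` onto the cone
above `u` by replacing the prefix. Any such map `g` satisfies `g ∘ y_t = y_u ∘ g`: on the cone
above `t` both sides replace `t` by `u` and apply `y` to the tail, and off it injectivity of `g`
keeps `g ξ` off the cone above `u`, so both sides equal `g ξ`.
-/

open Stream' Function

theorem Stream'.take_length_eq_iff_exists_append {α : Type*} (s : List α) (ξ : Stream' α) :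
    ξ.take s.length = s ↔ ∃ η, ξ = s ++ₛ η := by
  constructor
  · intro h
    exact ⟨ξ.drop s.length, by nth_rw 1 [← append_take_drop s.length ξ, h]⟩
  · rintro ⟨η, rfl⟩
    rw [take_append_of_le_length _ _ _ le_rfl, List.take_length]

section Localization

variable (s : List Bool) (f : Stream' Bool → Stream' Bool)

theorem loc_append (η : Stream' Bool) : loc s f (s ++ₛ η) = s ++ₛ f η := by
  rw [loc, if_pos ((take_length_eq_iff_exists_append s _).mpr ⟨η, rfl⟩), drop_append_stream]

theorem loc_of_forall_ne {ξ : Stream' Bool} (h : ∀ η, ξ ≠ s ++ₛ η) : loc s f ξ = ξ :=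
  if_neg (by rwa [take_length_eq_iff_exists_append, not_exists])

variable {f}

theorem Function.Injective.loc (hf : Injective f) : Injective (loc s f) := by
  intro a b h
  by_cases ha : ∃ η, a = s ++ₛ η <;> by_cases hb : ∃ η, b = s ++ₛ η
  · obtain ⟨η, rfl⟩ := ha
    obtain ⟨η', rfl⟩ := hb
    rw [loc_append, loc_append, append_right_inj] at h
    rw [hf h]
  · obtain ⟨η, rfl⟩ := ha
    rw [loc_append, loc_of_forall_ne s f (not_exists.mp hb)] at h
    exact absurd ⟨f η, h.symm⟩ hb
  · obtain ⟨η, rfl⟩ := hb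
    rw [loc_append, loc_of_forall_ne s f (not_exists.mp ha)] at h
    exact absurd ⟨f η, h⟩ ha
  · rwa [loc_of_forall_ne s f (not_exists.mp ha), loc_of_forall_ne s f (not_exists.mp hb)] at h

end Localization

theorem comp_loc_eq_loc_comp {g : Stream' Bool → Stream' Bool} (y : Stream' Bool → Stream' Bool)
    {t u : List Bool} (hg : Injective g) (htu : ∀ η, g (t ++ₛ η) = u ++ₛ η) (ξ : Stream' Bool) :
    g (loc t y ξ) = loc u y (g ξ) := by
  by_cases hξ : ∃ η, ξ = t ++ₛ η
  · obtain ⟨η, rfl⟩ := hξ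
    rw [loc_append, htu, htu, loc_append]
  · have hgξ : ∀ η, g ξ ≠ u ++ₛ η := fun η h => hξ ⟨η, hg (h.trans (htu η).symm)⟩
    rw [loc_of_forall_ne t y (not_exists.mp hξ), loc_of_forall_ne u y hgξ]

/-- The inverse of `x`: `0η ↦ 00η`, `10η ↦ 01η`, `11η ↦ 1η`. -/
def xInv (ξ : Stream' Bool) : Stream' Bool :=
  if ξ.head then
    if ξ.tail.head then true :: ξ.tail.tail else false :: true :: ξ.tail.tail
  else false :: false :: ξ.tail

theorem leftInverse_xInv {x : Stream' Bool → Stream' Bool}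
    (hx00 : ∀ η, x (false :: false :: η) = false :: η)
    (hx01 : ∀ η, x (false :: true :: η) = true :: false :: η)
    (hx1 : ∀ η, x (true :: η) = true :: true :: η) :
    LeftInverse xInv x := by
  intro a
  obtain ⟨b₀, b₁, η, rfl⟩ : ∃ (b₀ b₁ : Bool) (η : Stream' Bool), a = b₀ :: b₁ :: η :=
    ⟨a.head, a.tail.head, a.tail.tail, by rw [Stream'.eta, Stream'.eta]⟩
  cases b₀ <;> cases b₁ <;> simp [xInv, hx00, hx01, hx1]

theorem y_x_conjugation_relation_general
    (x y : Stream' Bool → Stream' Bool)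
    (hx00 : ∀ η, x (Stream'.cons false (Stream'.cons false η)) = Stream'.cons false η)
    (hx01 : ∀ η, x (Stream'.cons false (Stream'.cons true η)) =
      Stream'.cons true (Stream'.cons false η))
    (hx1 : ∀ η, x (Stream'.cons true η) =
      Stream'.cons true (Stream'.cons true η))
    (s t u : List Bool)
    (htu : ∀ η : Stream' Bool,
      loc s x (Stream'.appendStream' t η) = Stream'.appendStream' u η) :
    ∀ ξ : Stream' Bool, loc s x (loc t y ξ) = loc u y (loc s x ξ) :=
  comp_loc_eq_loc_comp y ((leftInverse_xInv hx00 hx01 hx1).injective.loc s) htu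

/-- if `t.x_s` is defined (and equals the finite sequence `u`, i.e.
`x_s` maps the cone above `t` onto the cone above `u` by changing only the prefix),
then `y_t · x_s = x_s · y_{t.x_s}` (left-to-right composition). -/
theorem y_x_conjugation_relation
    (x y z : Stream' Bool → Stream' Bool)
    (hx00 : ∀ η, x (Stream'.cons false (Stream'.cons false η)) = Stream'.cons false η)
    (hx01 : ∀ η, x (Stream'.cons false (Stream'.cons true η)) =
      Stream'.cons true (Stream'.cons false η))
    (hx1 : ∀ η, x (Stream'.cons true η) =
      Stream'.cons true (Stream'.cons true η))
    (hy00 : ∀ η, y (Stream'.cons false (Stream'.cons false η)) =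
      Stream'.cons false (y η))
    (hy01 : ∀ η, y (Stream'.cons false (Stream'.cons true η)) =
      Stream'.cons true (Stream'.cons false (z η)))
    (hy1 : ∀ η, y (Stream'.cons true η) =
      Stream'.cons true (Stream'.cons true (y η)))
    (hz0 : ∀ η, z (Stream'.cons false η) =
      Stream'.cons false (Stream'.cons false (z η)))
    (hz10 : ∀ η, z (Stream'.cons true (Stream'.cons false η)) =
      Stream'.cons false (Stream'.cons true (y η)))
    (hz11 : ∀ η, z (Stream'.cons true (Stream'.cons true η)) =
      Stream'.cons true (z η))
    (s t u : List Bool)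
    (htu : ∀ η : Stream' Bool,
      loc s x (Stream'.appendStream' t η) = Stream'.appendStream' u η) :
    ∀ ξ : Stream' Bool, loc s x (loc t y ξ) = loc u y (loc s x ξ) :=
  y_x_conjugation_relation_general x y hx00 hx01 hx1 s t u htu
end

section
/- The map Φ: 2^ℕ → ℝ ∪ {∞} defined by Φ(0ξ) = −φ(ξ̃) and Φ(1ξ) = φ(ξ), where ξ̃ is the bitwise complement of ξ, is surjective onto the real projective line ℝ ∪ {∞}. -/
open OnePoint

open Classical in
noncomputable def Tm (x : ENNReal) : ENNReal := if 1 ≤ x then x - 1 else (x⁻¹ - 1)⁻¹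
open Classical in
noncomputable def bb (x : ENNReal) : Bool := if 1 ≤ x then true else false
noncomputable def xi (x : ENNReal) : Stream' Bool := Stream'.corec bb Tm x


lemma xi_eq (x : ENNReal) : xi x = Stream'.cons (bb x) (xi (Tm x)) :=
  Stream'.corec_eq bb Tm x

lemma bb_eq_true {x : ENNReal} : bb x = true ↔ 1 ≤ x := by
  simp [bb]

lemma bb_eq_false {x : ENNReal} : bb x = false ↔ ¬ 1 ≤ x := by
  simp [bb]

lemma Tm_of_le {x : ENNReal} (h : 1 ≤ x) : Tm x = x - 1 := by simp [Tm, h]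

lemma Tm_of_lt {x : ENNReal} (h : ¬ 1 ≤ x) : Tm x = (x⁻¹ - 1)⁻¹ := by simp [Tm, h]

lemma Tm_ne_top {x : ENNReal} (h : x ≠ ⊤) : Tm x ≠ ⊤ := by
  by_cases h1 : 1 ≤ x
  · rw [Tm_of_le h1]
    exact fun ht => h (top_le_iff.mp (ht ▸ tsub_le_self : (⊤ : ENNReal) ≤ x))
  · rw [Tm_of_lt h1]
    rw [Ne, ENNReal.inv_eq_top, tsub_eq_zero_iff_le, ENNReal.inv_le_one]
    exact h1

lemma reconstruct_true {x : ENNReal} (h : 1 ≤ x) : x = 1 + Tm x := by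
  rw [Tm_of_le h, add_tsub_cancel_of_le h]

lemma reconstruct_false {x : ENNReal} (h : ¬ 1 ≤ x) : x = (1 + (Tm x)⁻¹)⁻¹ := by
  rw [Tm_of_lt h, inv_inv]
  have h1 : 1 ≤ x⁻¹ := ENNReal.one_le_inv.mpr (le_of_lt (lt_of_not_ge h))
  rw [add_tsub_cancel_of_le h1, inv_inv]

lemma Fmono {u v : ENNReal} (h : u ≤ v) : (1 + u⁻¹)⁻¹ ≤ (1 + v⁻¹)⁻¹ := by
  gcongr

lemma Ffrac (p q : ℕ) : (1 + ((p : ENNReal)/q)⁻¹)⁻¹ = (p : ENNReal)/(p+q) := by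
  rcases Nat.eq_zero_or_pos p with hp | hp
  · subst hp; simp
  · have hp0 : (p : ENNReal) ≠ 0 := Nat.cast_ne_zero.mpr hp.ne'
    have hpt : (p : ENNReal) ≠ ⊤ := ENNReal.natCast_ne_top p
    rw [ENNReal.inv_div (Or.inr hpt) (Or.inr hp0)]
    rw [show (1 : ENNReal) + (q : ENNReal)/p = ((p : ENNReal) + q)/p by
      rw [ENNReal.add_div, ENNReal.div_self hp0 hpt]]
    rw [ENNReal.inv_div (Or.inl hpt) (Or.inl hp0)]

lemma div_nat_add_one (p q : ℕ) (hq : q ≠ 0) :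
    ((p + q : ℕ) : ENNReal)/q = (p : ENNReal)/q + 1 := by
  push_cast
  rw [ENNReal.add_div, ENNReal.div_self (Nat.cast_ne_zero.mpr hq) (ENNReal.natCast_ne_top q)]

lemma interval : ∀ (n : ℕ) (y z : ENNReal), (∀ k < n, bb (Tm^[k] y) = bb (Tm^[k] z)) →
    ∃ a b c d : ℕ, 1 ≤ b ∧ 1 ≤ c ∧ c*b = a*d + 1 ∧ n + 2 ≤ a+b+c+d ∧
      (a : ENNReal)/b ≤ y ∧ y ≤ (c : ENNReal)/d ∧
      (a : ENNReal)/b ≤ z ∧ z ≤ (c : ENNReal)/d := by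
  intro n
  induction n with
  | zero =>
    intro y z _
    refine ⟨0, 1, 1, 0, le_refl _, le_refl _, by norm_num, by norm_num, ?_, ?_, ?_, ?_⟩ <;>
      simp [ENNReal.div_zero]
  | succ n ih =>
    intro y z hbits
    have h0 : bb y = bb z := by
      have := hbits 0 n.succ_pos; simpa using this
    have hT : ∀ k < n, bb (Tm^[k] (Tm y)) = bb (Tm^[k] (Tm z)) := by
      intro k hk
      have := hbits (k+1) (by omega)
      rwa [Function.iterate_succ_apply, Function.iterate_succ_apply] at this
    obtain ⟨a, b, c, d, hb, hc, hdet, hsum, hly, huy, hlz, huz⟩ := ih (Tm y) (Tm z) hT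
    by_cases hy1 : 1 ≤ y
    · have hz1 : 1 ≤ z := bb_eq_true.mp (h0 ▸ bb_eq_true.mpr hy1)
      refine ⟨a + b, b, c + d, d, hb, by omega, ?_, by omega, ?_, ?_, ?_, ?_⟩
      · calc (c+d)*b = c*b + d*b := by ring
          _ = a*d + 1 + d*b := by rw [hdet]
          _ = (a+b)*d + 1 := by ring
      · rw [div_nat_add_one a b (by omega)]
        calc (a : ENNReal)/b + 1 ≤ (y - 1) + 1 := by
              gcongr
              rw [← Tm_of_le hy1]; exact hly
          _ = y := tsub_add_cancel_of_le hy1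
      · rcases Nat.eq_zero_or_pos d with hd | hd
        · subst hd
          rw [show ((0:ℕ):ENNReal) = 0 from Nat.cast_zero,
            ENNReal.div_zero (Nat.cast_ne_zero.mpr (show c + 0 ≠ 0 by omega))]
          exact le_top
        · rw [div_nat_add_one c d (by omega)]
          rw [← tsub_le_iff_right, ← Tm_of_le hy1]
          exact huy
      · rw [div_nat_add_one a b (by omega)]
        calc (a : ENNReal)/b + 1 ≤ (z - 1) + 1 := by
              gcongr
              rw [← Tm_of_le hz1]; exact hlz
          _ = z := tsub_add_cancel_of_le hz1
      · rcases Nat.eq_zero_or_pos d with hd | hd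
        · subst hd
          rw [show ((0:ℕ):ENNReal) = 0 from Nat.cast_zero,
            ENNReal.div_zero (Nat.cast_ne_zero.mpr (show c + 0 ≠ 0 by omega))]
          exact le_top
        · rw [div_nat_add_one c d (by omega)]
          rw [← tsub_le_iff_right, ← Tm_of_le hz1]
          exact huz
    · have hz1 : ¬ 1 ≤ z := bb_eq_false.mp (h0 ▸ bb_eq_false.mpr hy1)
      refine ⟨a, a + b, c, c + d, by omega, hc, ?_, by omega, ?_, ?_, ?_, ?_⟩
      · calc c*(a+b) = c*a + c*b := by ring
          _ = c*a + (a*d + 1) := by rw [hdet]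
          _ = a*(c+d) + 1 := by ring
      · rw [show ((a:ℕ):ENNReal)/((a+b : ℕ) : ENNReal) = (1 + ((a : ENNReal)/b)⁻¹)⁻¹ by
          rw [Ffrac a b]; push_cast; ring_nf]
        rw [reconstruct_false hy1]
        exact Fmono hly
      · rw [show ((c:ℕ):ENNReal)/((c+d : ℕ) : ENNReal) = (1 + ((c : ENNReal)/d)⁻¹)⁻¹ by
          rw [Ffrac c d]; push_cast; ring_nf]
        rw [reconstruct_false hy1]
        exact Fmono huy
      · rw [show ((a:ℕ):ENNReal)/((a+b : ℕ) : ENNReal) = (1 + ((a : ENNReal)/b)⁻¹)⁻¹ by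
          rw [Ffrac a b]; push_cast; ring_nf]
        rw [reconstruct_false hz1]
        exact Fmono hlz
      · rw [show ((c:ℕ):ENNReal)/((c+d : ℕ) : ENNReal) = (1 + ((c : ENNReal)/d)⁻¹)⁻¹ by
          rw [Ffrac c d]; push_cast; ring_nf]
        rw [reconstruct_false hz1]
        exact Fmono huz

noncomputable def gg (x : ENNReal) : ℝ := ((1 + x⁻¹)⁻¹).toReal


lemma F_ne_top (x : ENNReal) : (1 + x⁻¹)⁻¹ ≠ ⊤ := by
  rw [Ne, ENNReal.inv_eq_top]
  simp

lemma gg_mono {y z : ENNReal} (h : y ≤ z) : gg y ≤ gg z :=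
  ENNReal.toReal_mono (F_ne_top z) (Fmono h)

lemma gg_inj {y z : ENNReal} (h : gg y = gg z) : y = z := by
  have h1 : (1 + y⁻¹)⁻¹ = (1 + z⁻¹)⁻¹ :=
    (ENNReal.toReal_eq_toReal_iff' (F_ne_top y) (F_ne_top z)).mp h
  have h2 : 1 + y⁻¹ = 1 + z⁻¹ := by
    have := congrArg (·⁻¹) h1
    simpa using this
  have h3 : y⁻¹ = z⁻¹ := (ENNReal.add_right_inj ENNReal.one_ne_top).mp h2
  have := congrArg (·⁻¹) h3
  simpa using this

lemma gg_frac (p q : ℕ) : gg ((p : ENNReal)/q) = (p : ℝ)/((p : ℝ) + q) := by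
  rw [gg, Ffrac p q]
  rw [ENNReal.toReal_div]
  norm_cast

lemma eq_of_bits_eq {y z : ENNReal} (h : ∀ k, bb (Tm^[k] y) = bb (Tm^[k] z)) : y = z := by
  apply gg_inj
  have key : ∀ n : ℕ, |gg y - gg z| ≤ 1/(n+1) := by
    intro n
    obtain ⟨a, b, c, d, hb, hc, hdet, hsum, hly, huy, hlz, huz⟩ :=
      interval n y z (fun k _ => h k)
    have hA : (a : ℝ)/((a:ℝ)+b) ≤ gg y := by rw [← gg_frac]; exact gg_mono hly
    have hA' : (a : ℝ)/((a:ℝ)+b) ≤ gg z := by rw [← gg_frac]; exact gg_mono hlz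
    have hC : gg y ≤ (c : ℝ)/((c:ℝ)+d) := by rw [← gg_frac]; exact gg_mono huy
    have hC' : gg z ≤ (c : ℝ)/((c:ℝ)+d) := by rw [← gg_frac]; exact gg_mono huz
    set P : ℝ := (a:ℝ) + b with hP
    set Q : ℝ := (c:ℝ) + d with hQ
    have hbR : (1:ℝ) ≤ (b:ℝ) := by exact_mod_cast hb
    have hcR : (1:ℝ) ≤ (c:ℝ) := by exact_mod_cast hc
    have haR : (0:ℝ) ≤ (a:ℝ) := Nat.cast_nonneg a
    have hdR : (0:ℝ) ≤ (d:ℝ) := Nat.cast_nonneg d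
    have hP1 : (1:ℝ) ≤ P := by rw [hP]; linarith
    have hQ1 : (1:ℝ) ≤ Q := by rw [hQ]; linarith
    have hsumR : (n:ℝ) + 2 ≤ P + Q := by
      rw [hP, hQ]
      have : ((n + 2 : ℕ) : ℝ) ≤ ((a+b+c+d : ℕ) : ℝ) := Nat.cast_le.mpr hsum
      push_cast at this ⊢
      linarith
    have hdetR : (c:ℝ)*(b:ℝ) = (a:ℝ)*(d:ℝ) + 1 := by exact_mod_cast hdet
    have hprod : (n:ℝ) + 1 ≤ P*Q := by nlinarith [(P-1)*(Q-1)]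
    have hPQpos : (0:ℝ) < P*Q := by nlinarith
    have hPne : P ≠ 0 := by linarith
    have hQne : Q ≠ 0 := by linarith
    have hnum : (c:ℝ)*P - Q*(a:ℝ) = 1 := by rw [hP, hQ]; linarith [hdetR, mul_comm (c:ℝ) (b:ℝ)]
    have hgap : (c:ℝ)/Q - (a:ℝ)/P = 1/(P*Q) := by
      rw [div_sub_div _ _ hQne hPne, hnum, mul_comm Q P]
    have hfin : 1/(P*Q) ≤ 1/((n:ℝ)+1) := by
      apply one_div_le_one_div_of_le (by positivity) hprod
    rw [abs_le]
    constructor <;> linarith [hgap, hfin, hA, hA', hC, hC']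
  by_contra hne
  obtain ⟨n, hn⟩ := exists_nat_one_div_lt (abs_pos.mpr (sub_ne_zero.mpr hne))
  exact absurd (key n) (not_le.mpr (by exact_mod_cast hn))


section Phi
variable (φ : Stream' Bool → ENNReal)
    (hφ0 : ∀ ξ, φ (Stream'.cons false ξ) = (1 + (φ ξ)⁻¹)⁻¹)
    (hφ1 : ∀ ξ, φ (Stream'.cons true ξ) = 1 + φ ξ)

include hφ0 hφ1

lemma phi_xi_step (x : ENNReal) :
    φ (xi x) = if 1 ≤ x then 1 + φ (xi (Tm x)) else (1 + (φ (xi (Tm x)))⁻¹)⁻¹ := by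
  by_cases h : 1 ≤ x
  · rw [xi_eq x, bb_eq_true.mpr h, hφ1, if_pos h]
  · rw [xi_eq x, bb_eq_false.mpr h, hφ0, if_neg h]

-- exists false bit for finite x
omit hφ0 hφ1 in

lemma exists_false_bit : ∀ (n : ℕ) (x : ENNReal), x < n → ∃ k, bb (Tm^[k] x) = false := by
  intro n
  induction n with
  | zero => intro x hx; exact absurd hx (by simp)
  | succ n ih =>
    intro x hx
    by_cases h : 1 ≤ x
    · obtain ⟨k, hk⟩ := ih (Tm x) (by
        rw [Tm_of_le h]
        have hxt : x ≠ ⊤ := (hx.trans_le le_top).ne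
        rw [ENNReal.sub_lt_iff_lt_right (by norm_num) h]
        calc x < (n+1 : ℕ) := hx
        _ = (n : ENNReal) + 1 := by push_cast; ring)
      exact ⟨k + 1, by rwa [Function.iterate_succ_apply]⟩
    · exact ⟨0, bb_eq_false.mpr h⟩

lemma phi_xi_ne_top_of_bit : ∀ (k : ℕ) (x : ENNReal), bb (Tm^[k] x) = false → φ (xi x) ≠ ⊤ := by
  intro k
  induction k with
  | zero =>
    intro x hb
    simp only [Function.iterate_zero, id] at hb
    have h := bb_eq_false.mp hb
    rw [phi_xi_step φ hφ0 hφ1, if_neg h]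
    simp [ENNReal.inv_eq_top]
  | succ k ih =>
    intro x hb
    rw [Function.iterate_succ_apply] at hb
    by_cases h : 1 ≤ x
    · rw [phi_xi_step φ hφ0 hφ1, if_pos h]
      exact ENNReal.add_ne_top.mpr ⟨ENNReal.one_ne_top, ih (Tm x) hb⟩
    · rw [phi_xi_step φ hφ0 hφ1, if_neg h]
      simp [ENNReal.inv_eq_top]

lemma phi_xi_ne_top {x : ENNReal} (hx : x ≠ ⊤) : φ (xi x) ≠ ⊤ := by
  obtain ⟨n, hn⟩ := ENNReal.exists_nat_gt hx
  obtain ⟨k, hk⟩ := exists_false_bit n x hn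
  exact phi_xi_ne_top_of_bit φ hφ0 hφ1 k x hk

lemma step_conj {x : ENNReal} (hx : x ≠ ⊤) :
    bb (φ (xi x)) = bb x ∧ Tm (φ (xi x)) = φ (xi (Tm x)) := by
  by_cases h : 1 ≤ x
  · rw [phi_xi_step φ hφ0 hφ1, if_pos h]
    constructor
    · rw [bb_eq_true.mpr h, bb_eq_true]; exact le_self_add
    · rw [Tm_of_le le_self_add, ENNReal.add_sub_cancel_left ENNReal.one_ne_top]
  · have ha : φ (xi (Tm x)) ≠ ⊤ := phi_xi_ne_top φ hφ0 hφ1 (Tm_ne_top hx)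
    rw [phi_xi_step φ hφ0 hφ1, if_neg h]
    have hlt : (1 + (φ (xi (Tm x)))⁻¹)⁻¹ < 1 := by
      rw [ENNReal.inv_lt_one]
      exact ENNReal.lt_add_right ENNReal.one_ne_top (ENNReal.inv_ne_zero.mpr ha)
    constructor
    · rw [bb_eq_false.mpr h, bb_eq_false]; exact not_le.mpr hlt
    · rw [Tm_of_lt (not_le.mpr hlt), inv_inv,
        ENNReal.add_sub_cancel_left ENNReal.one_ne_top, inv_inv]

omit hφ0 hφ1 in
lemma Tm_iter_ne_top {x : ENNReal} (hx : x ≠ ⊤) : ∀ n, Tm^[n] x ≠ ⊤ := by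
  intro n
  induction n with
  | zero => exact hx
  | succ n ih => rw [Function.iterate_succ_apply']; exact Tm_ne_top ih

lemma iter_conj {x : ENNReal} (hx : x ≠ ⊤) :
    ∀ n, Tm^[n] (φ (xi x)) = φ (xi (Tm^[n] x)) := by
  intro n
  induction n with
  | zero => rfl
  | succ n ih =>
    rw [Function.iterate_succ_apply', ih,
      (step_conj φ hφ0 hφ1 (Tm_iter_ne_top hx n)).2, Function.iterate_succ_apply']

lemma bits_eq {x : ENNReal} (hx : x ≠ ⊤) :
    ∀ n, bb (Tm^[n] (φ (xi x))) = bb (Tm^[n] x) := by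
  intro n
  rw [iter_conj φ hφ0 hφ1 hx n]
  exact (step_conj φ hφ0 hφ1 (Tm_iter_ne_top hx n)).1

lemma phi_xi_eq {x : ENNReal} (hx : x ≠ ⊤) : φ (xi x) = x :=
  eq_of_bits_eq (bits_eq φ hφ0 hφ1 hx)

omit hφ0 in
lemma phi_const_true : φ (Stream'.const true) = ⊤ := by
  have h := hφ1 (Stream'.const true)
  rw [← Stream'.const_eq] at h
  by_contra hfin
  have : φ (Stream'.const true) < 1 + φ (Stream'.const true) := by
    rw [add_comm]
    exact ENNReal.lt_add_right hfin one_ne_zero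
  exact absurd h (ne_of_lt this)

end Phi



/-- Φ is surjective onto the real projective line ℝ ∪ {∞}. -/
theorem Phi_surjective
    (φ : Stream' Bool → ENNReal)
    (hφ0 : ∀ ξ, φ (Stream'.cons false ξ) = (1 + (φ ξ)⁻¹)⁻¹)
    (hφ1 : ∀ ξ, φ (Stream'.cons true ξ) = 1 + φ ξ)
    (Φ : Stream' Bool → OnePoint ℝ)
    (hΦ1 : ∀ ξ, Φ (Stream'.cons true ξ) =
      if φ ξ = ⊤ then (∞ : OnePoint ℝ) else ((φ ξ).toReal : OnePoint ℝ))
    (hΦ0 : ∀ ξ, Φ (Stream'.cons false ξ) =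
      if φ (Stream'.map not ξ) = ⊤ then (∞ : OnePoint ℝ)
      else ((-(φ (Stream'.map not ξ)).toReal : ℝ) : OnePoint ℝ)) :
    Function.Surjective Φ := by
  intro p
  induction p using OnePoint.rec with
  | infty =>
    refine ⟨Stream'.cons true (Stream'.const true), ?_⟩
    rw [hΦ1, if_pos (phi_const_true φ hφ1)]
  | coe r =>
    rcases le_or_gt 0 r with hr | hr
    · set x : ENNReal := ENNReal.ofReal r with hx
      have hxt : x ≠ ⊤ := ENNReal.ofReal_ne_top
      refine ⟨Stream'.cons true (xi x), ?_⟩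
      rw [hΦ1, phi_xi_eq φ hφ0 hφ1 hxt, if_neg hxt, hx, ENNReal.toReal_ofReal hr]
    · set x : ENNReal := ENNReal.ofReal (-r) with hx
      have hxt : x ≠ ⊤ := ENNReal.ofReal_ne_top
      refine ⟨Stream'.cons false (Stream'.map not (xi x)), ?_⟩
      have hmap : Stream'.map not (Stream'.map not (xi x)) = xi x := by
        rw [Stream'.map_map]
        have : (not ∘ not) = id := by funext b; simp
        rw [this, Stream'.map_id]
      rw [hΦ0, hmap, phi_xi_eq φ hφ0 hφ1 hxt, if_neg hxt, hx,
        ENNReal.toReal_ofReal (by linarith), neg_neg]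
end

section
/- In the group of homeomorphisms of ℝ generated by a(t) = t+1, b (piecewise: t for t≤0, t/(1−t) for 0≤t≤1/2, 3−1/t for 1/2≤t≤1, t+1 for t≥1), and c(t) = 2t/(1+t) on [0,1] (identity elsewhere), the element b·c·a⁻¹·c⁻¹·a coincides with t ↦ 2t on the interval [0,1]. -/
/-- The homeomorphism b of ℝ. -/
noncomputable def bmap (t : ℝ) : ℝ :=
  if t ≤ 0 then t
  else if t ≤ 1/2 then t / (1 - t)
  else if t ≤ 1 then 3 - 1/t
  else t + 1

/-- The homeomorphism c of ℝ: c(t) = 2t/(1+t) on [0,1], identity elsewhere. -/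
noncomputable def cmap (t : ℝ) : ℝ :=
  if 0 ≤ t ∧ t ≤ 1 then 2 * t / (1 + t) else t

/-!
Since `a` is the translation by 1, the claim says `c (b t) - 1 = c (2t - 1)` on `[0,1]`.
On `[0, 1/2]`, `b` is `t ↦ t/(1-t)`, whose composite with `c` is exactly `t ↦ 2t`; then `2t - 1 ≤ 0`
lies where `c` is the identity. On `[1/2, 1]`, `b t = 3 - 1/t > 1` lies where `c` is the identity,
while `c (2t - 1) = 2 - 1/t`.
-/

lemma cmap_of_mem_Icc {t : ℝ} (h0 : 0 ≤ t) (h1 : t ≤ 1) : cmap t = 2 * t / (1 + t) :=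
  if_pos ⟨h0, h1⟩

lemma cmap_of_one_lt {t : ℝ} (h : 1 < t) : cmap t = t :=
  if_neg fun ht => (ht.2.trans_lt h).false

lemma cmap_of_nonpos {t : ℝ} (h : t ≤ 0) : cmap t = t := by
  rcases h.lt_or_eq with h | rfl
  · exact if_neg fun ht => (ht.1.trans_lt h).false
  · simp [cmap]

lemma bmap_of_le_half {t : ℝ} (h0 : 0 ≤ t) (h : t ≤ 1/2) : bmap t = t / (1 - t) := by
  rcases h0.lt_or_eq with h0 | rfl
  · simp only [bmap, if_neg h0.not_ge, if_pos h]
  · simp [bmap]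

lemma bmap_of_half_lt {t : ℝ} (h : 1/2 < t) (h1 : t ≤ 1) : bmap t = 3 - 1/t := by
  have h0 : ¬ t ≤ 0 := by linarith
  simp only [bmap, if_neg h0, if_neg h.not_ge, if_pos h1]

lemma cmap_bmap_of_le_half {t : ℝ} (h0 : 0 ≤ t) (h : t ≤ 1/2) : cmap (bmap t) = 2 * t := by
  have h1t : 0 < 1 - t := by linarith
  rw [bmap_of_le_half h0 h, cmap_of_mem_Icc (by positivity) (by rw [div_le_one h1t]; linarith)]
  field_simp
  ring

lemma cmap_bmap_sub_one {t : ℝ} (h0 : 0 ≤ t) (h1 : t ≤ 1) :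
    cmap (bmap t) - 1 = cmap (2 * t - 1) := by
  rcases le_or_gt t (1/2) with h | h
  · rw [cmap_bmap_of_le_half h0 h, cmap_of_nonpos (by linarith)]
  · have ht : 0 < t := by linarith
    have hb : 1 < 3 - 1/t := by
      have : 1/t < 2 := by rw [div_lt_iff₀ ht]; linarith
      linarith
    rw [bmap_of_half_lt h h1, cmap_of_one_lt hb, cmap_of_mem_Icc (by linarith) (by linarith)]
    field_simp
    ring

theorem bcacainv_is_doubling_general
    (cinv : ℝ → ℝ) (hc1 : ∀ t, cinv (cmap t) = t) :
    ∀ t : ℝ, 0 ≤ t → t ≤ 1 → cinv (cmap (bmap t) - 1) + 1 = 2 * t := by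
  intro t h0 h1
  rw [cmap_bmap_sub_one h0 h1, hc1]
  ring

/-- the element b·c·a⁻¹·c⁻¹·a (applied left-to-right, with a(t) = t+1)
coincides with t ↦ 2t on [0,1]. -/
theorem bcacainv_is_doubling
    (cinv : ℝ → ℝ) (hc1 : ∀ t, cinv (cmap t) = t) (hc2 : ∀ t, cmap (cinv t) = t) :
    ∀ t : ℝ, 0 ≤ t → t ≤ 1 → cinv (cmap (bmap t) - 1) + 1 = 2 * t :=
  bcacainv_is_doubling_general cinv hc1
end
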